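/- arXiv:0802.1471 — 2 statements merged into one kernel-verified Lean document; each statement's English description precedes it below -/
import Mathlib

section
/- Let n, r be positive integers with r ≤ n and let β > 0. Suppose the set {0,1}^n × {y ∈ {0,1}^n : |y| ≤ r} is partitioned into t combinatorial rectangles R_1, …, R_t (each R_i = A_i × B_i with A_i ⊆ {0,1}^n and B_i ⊆ {y : |y| ≤ r}), each rectangle R_i carrying a label a_i ∈ {0,1}, and that the number of pairs (x,y) whose rectangle's label equals x·y mod 2 is at least (1/2 + β) · 2^n · B(n,r). Then t ≥ (2β)^2 · B(n,r). In particular, if t ≤ 2^c then c ≥ log₂ B(n,r) − 2 log₂(1/(2β)). -/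
/-- Hamming weight of a bit string. -/
def wt {n : ℕ} (y : Fin n → Bool) : ℕ := (Finset.univ.filter (fun i => y i = true)).card

/-- Inner product mod 2 of two bit strings, as an element of `ZMod 2`. -/
def ip {n : ℕ} (x y : Fin n → Bool) : ZMod 2 := ∑ i, if x i && y i then 1 else 0

/-! With `signChar a = (-1)^a`, summing `signChar (label) * signChar (x·y)` over the rectangles
counts agreements minus disagreements, so by hypothesis it is at least `2β·|D|`, where
`D = {0,1}^n × {|y| ≤ r}` has `2^n·B(n,r)` elements. The matrix `signChar (x·y)` has orthogonal
columns of squared norm `2^n`, so by Lindsey's lemma the sum over `A × B` is at most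
`√(2^n·|A|·|B|)` in absolute value; Cauchy–Schwarz over the `t` rectangles together with
`∑ |Aᵢ|·|Bᵢ| = |D|` gives `(2β·|D|)² ≤ t·2^n·|D|`. -/

open Finset

noncomputable def signChar (a : ZMod 2) : ℝ := if a = 0 then 1 else -1

lemma zmod_two_eq_zero_or_eq_one (a : ZMod 2) : a = 0 ∨ a = 1 := by
  revert a; decide

lemma signChar_mul_signChar (a b : ZMod 2) :
    signChar a * signChar b = if a = b then 1 else -1 := by
  rcases zmod_two_eq_zero_or_eq_one a with rfl | rfl <;>
    rcases zmod_two_eq_zero_or_eq_one b with rfl | rfl <;>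
    norm_num [signChar]

lemma signChar_add (a b : ZMod 2) : signChar (a + b) = signChar a * signChar b := by
  rw [signChar_mul_signChar, signChar]
  simp only [CharTwo.add_eq_zero]

lemma signChar_sq (a : ZMod 2) : signChar a ^ 2 = 1 := by
  rw [sq, signChar_mul_signChar, if_pos rfl]

lemma signChar_sum {ι : Type*} (s : Finset ι) (f : ι → ZMod 2) :
    signChar (∑ i ∈ s, f i) = ∏ i ∈ s, signChar (f i) := by
  induction s using Finset.cons_induction with
  | empty => simp [signChar]
  | cons i s hi ih => rw [sum_cons, prod_cons, signChar_add, ih]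

lemma signChar_ip {n : ℕ} (x y : Fin n → Bool) :
    signChar (ip x y) = ∏ i, if x i && y i then -1 else 1 := by
  rw [ip, signChar_sum]
  exact prod_congr rfl fun i _ => by split_ifs <;> simp [signChar]

/-- The `±1` inner-product matrix is a Hadamard matrix. -/
lemma sum_signChar_ip_mul_signChar_ip {n : ℕ} (y y' : Fin n → Bool) :
    ∑ x, signChar (ip x y) * signChar (ip x y') = if y = y' then 2 ^ n else 0 := by
  have hcoord (u v : Bool) :
      ∑ b : Bool, (if b && u then (-1 : ℝ) else 1) * (if b && v then -1 else 1) =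
        if u = v then 2 else 0 := by
    cases u <;> cases v <;> norm_num
  simp only [signChar_ip, ← prod_mul_distrib]
  rw [← Fintype.prod_sum fun i b =>
      (if b && y i then (-1 : ℝ) else 1) * (if b && y' i then -1 else 1),
    Fintype.prod_congr _ _ fun i => hcoord (y i) (y' i), Fintype.prod_ite_zero]
  simp only [← funext_iff, prod_const, card_univ, Fintype.card_fin]

/-- Lindsey's lemma, for any matrix with pairwise orthogonal columns of squared norm `N`. -/
lemma sq_sum_sum_le_of_orthogonal {α β : Type*} [Fintype α] [DecidableEq β]
    {h : α → β → ℝ} {N : ℝ}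
    (horth : ∀ y y', ∑ x, h x y * h x y' = if y = y' then N else 0)
    (A : Finset α) (B : Finset β) :
    (∑ x ∈ A, ∑ y ∈ B, h x y) ^ 2 ≤ N * #A * #B := by
  have hrows : ∑ x, (∑ y ∈ B, h x y) ^ 2 = N * #B := by
    simp only [sq, sum_mul_sum]
    rw [sum_comm]
    simp only [sum_comm (s := univ) (t := B), horth, sum_ite_eq]
    rw [sum_congr rfl fun y hy => if_pos hy, sum_const, nsmul_eq_mul, mul_comm]
  calc (∑ x ∈ A, ∑ y ∈ B, h x y) ^ 2 ≤ #A * ∑ x ∈ A, (∑ y ∈ B, h x y) ^ 2 :=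
        sq_sum_le_card_mul_sum_sq
    _ ≤ #A * ∑ x, (∑ y ∈ B, h x y) ^ 2 := by
        gcongr ?_ * ?_
        exact sum_le_sum_of_subset_of_nonneg (subset_univ A) fun x _ _ => sq_nonneg _
    _ = N * #A * #B := by rw [hrows]; ring

lemma sum_sum_eq_sum_of_existsUnique {ι γ M : Type*} [Fintype ι] [DecidableEq γ]
    [AddCommMonoid M] {D : Finset γ} {R : ι → Finset γ} (hsub : ∀ i, R i ⊆ D)
    (hcover : ∀ p ∈ D, ∃! i, p ∈ R i) (g : γ → M) :
    ∑ i, ∑ p ∈ R i, g p = ∑ p ∈ D, g p := by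
  have hunion : univ.biUnion R = D := by
    ext p
    simp only [mem_biUnion, mem_univ, true_and]
    exact ⟨fun ⟨i, hi⟩ => hsub i hi, fun hp => (hcover p hp).exists⟩
  have hdisj : ((univ : Finset ι) : Set ι).PairwiseDisjoint R := fun i _ j _ hij =>
    disjoint_left.2 fun p hi hj => hij ((hcover p (hsub i hi)).unique hi hj)
  rw [← hunion, sum_biUnion hdisj]

lemma sum_ite_one_neg_one {γ : Type*} (s : Finset γ) (P : γ → Prop) [DecidablePred P] :
    ∑ p ∈ s, (if P p then (1 : ℝ) else -1) = 2 * #{p ∈ s | P p} - #s := by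
  have h (p : γ) : (if P p then (1 : ℝ) else -1) = 2 * (if P p then 1 else 0) - 1 := by
    split_ifs <;> norm_num
  simp only [h, sum_sub_distrib, ← mul_sum, sum_boole, sum_const, nsmul_eq_mul, mul_one]

lemma card_filter_wt_eq (n k : ℕ) : #{y : Fin n → Bool | wt y = k} = n.choose k := by
  have hchoose : n.choose k = #(powersetCard k (univ : Finset (Fin n))) := by
    rw [card_powersetCard, card_univ, Fintype.card_fin]
  rw [hchoose]
  refine card_nbij' (fun y => ({i | y i = true} : Finset (Fin n))) (fun s i => decide (i ∈ s))
    ?_ ?_ ?_ ?_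
  · intro y hy
    simp only [coe_filter, mem_univ, true_and, mem_coe, mem_powersetCard_univ] at hy ⊢
    exact hy
  · intro s hs
    simp only [coe_filter, mem_univ, true_and, mem_coe, mem_powersetCard_univ] at hs ⊢
    simpa [wt] using hs
  · intro y _; funext i; simp
  · intro s _; ext i; simp

lemma card_filter_wt_le (n r : ℕ) :
    #{y : Fin n → Bool | wt y ≤ r} = ∑ k ∈ range (r + 1), n.choose k := by
  rw [card_eq_sum_card_fiberwise (f := wt) (t := range (r + 1))]
  · refine sum_congr rfl fun k hk => ?_
    rw [filter_filter, ← card_filter_wt_eq]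
    congr 1
    ext y
    simp only [mem_filter, mem_univ, true_and, and_iff_right_iff_imp]
    rintro rfl
    exact Nat.lt_succ_iff.1 (mem_range.1 hk)
  · intro y hy
    simpa [Nat.lt_succ_iff] using hy

lemma logb_sub_two_mul_logb_le {x N c : ℝ} (hx : x ≠ 0) (hN : 0 < N) (h : x ^ 2 * N ≤ 2 ^ c) :
    Real.logb 2 N - 2 * Real.logb 2 (1 / x) ≤ c := by
  have hlog := (Real.logb_le_logb (b := 2) one_lt_two (by positivity) (by positivity)).2 h
  rw [Real.logb_rpow two_pos (by norm_num), Real.logb_mul (by positivity) hN.ne',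
    Real.logb_pow] at hlog
  rw [one_div, Real.logb_inv]
  push_cast at hlog
  linarith

section LabeledRectanglePartition

variable {ι α β : Type*} [Fintype ι] [DecidableEq α] [DecidableEq β]
  {D : Finset (α × β)} {A : ι → Finset α} {B : ι → Finset β}

lemma sum_card_mul_card_eq_card (hsub : ∀ i, A i ×ˢ B i ⊆ D)
    (hcover : ∀ p ∈ D, ∃! i, p ∈ A i ×ˢ B i) :
    ∑ i, (#(A i) * #(B i) : ℝ) = #D := by
  simpa [card_product] using sum_sum_eq_sum_of_existsUnique hsub hcover fun _ => (1 : ℝ)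

lemma sum_signChar_mul_sum_sum_eq (hsub : ∀ i, A i ×ˢ B i ⊆ D)
    (hcover : ∀ p ∈ D, ∃! i, p ∈ A i ×ˢ B i) (a : ι → ZMod 2) (f : α → β → ZMod 2)
    -- an instance argument, so that the filter below matches however its predicate was decided
    -- (for `ι = Fin t` elaboration picks `Nat.decidableExistsFin`)
    [DecidablePred fun p : α × β => ∃ i, p.1 ∈ A i ∧ p.2 ∈ B i ∧ a i = f p.1 p.2] :
    ∑ i, signChar (a i) * ∑ x ∈ A i, ∑ y ∈ B i, signChar (f x y) =
      2 * #{p ∈ D | ∃ i, p.1 ∈ A i ∧ p.2 ∈ B i ∧ a i = f p.1 p.2} - #D := by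
  have hlabel (i : ι) (p : α × β) (hp : p ∈ A i ×ˢ B i) :
      signChar (a i) * signChar (f p.1 p.2) =
        if ∃ j, p.1 ∈ A j ∧ p.2 ∈ B j ∧ a j = f p.1 p.2 then 1 else -1 := by
    have hunique (j : ι) (hj : p ∈ A j ×ˢ B j) : j = i := (hcover p (hsub i hp)).unique hj hp
    rw [signChar_mul_signChar]
    refine if_congr ⟨fun h => ⟨i, mem_product.1 hp |>.1, mem_product.1 hp |>.2, h⟩, ?_⟩ rfl rfl
    rintro ⟨j, hjA, hjB, hj⟩
    rwa [hunique j (mem_product.2 ⟨hjA, hjB⟩)] at hj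
  simp only [mul_sum, ← sum_product']
  rw [← sum_ite_one_neg_one, ← sum_sum_eq_sum_of_existsUnique hsub hcover]
  exact sum_congr rfl fun i _ => sum_congr rfl (hlabel i)

lemma sq_sum_mul_sum_sum_le [Fintype α] {h : α → β → ℝ} {N : ℝ}
    (horth : ∀ y y', ∑ x, h x y * h x y' = if y = y' then N else 0)
    (hsub : ∀ i, A i ×ˢ B i ⊆ D) (hcover : ∀ p ∈ D, ∃! i, p ∈ A i ×ˢ B i)
    {s : ι → ℝ} (hs : ∀ i, s i ^ 2 ≤ 1) :
    (∑ i, s i * ∑ x ∈ A i, ∑ y ∈ B i, h x y) ^ 2 ≤ Fintype.card ι * N * #D := by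
  calc (∑ i, s i * ∑ x ∈ A i, ∑ y ∈ B i, h x y) ^ 2
      ≤ (∑ i, s i ^ 2) * ∑ i, (∑ x ∈ A i, ∑ y ∈ B i, h x y) ^ 2 :=
        sum_mul_sq_le_sq_mul_sq _ _ _
    _ ≤ Fintype.card ι * ∑ i, N * #(A i) * #(B i) := by
        gcongr ?_ * ?_
        · exact (sum_le_sum fun i _ => hs i).trans (by simp)
        · exact sum_le_sum fun i _ => sq_sum_sum_le_of_orthogonal horth (A i) (B i)
    _ = Fintype.card ι * N * #D := by
        simp only [mul_assoc, ← mul_sum, sum_card_mul_card_eq_card hsub hcover]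

end LabeledRectanglePartition

theorem rectangle_partition_lower_bound_general (n r t : ℕ)
    (β : ℝ) (hβ : 0 < β)
    (A B : Fin t → Finset (Fin n → Bool)) (a : Fin t → ZMod 2)
    (hB : ∀ i, ∀ y ∈ B i, wt y ≤ r)
    (hpart : ∀ x y : Fin n → Bool, wt y ≤ r → ∃! i : Fin t, x ∈ A i ∧ y ∈ B i)
    (hsucc : ((1 : ℝ) / 2 + β) * 2 ^ n * (∑ i ∈ Finset.range (r + 1), (n.choose i : ℝ)) ≤
      (((Finset.univ ×ˢ Finset.univ.filter (fun y : Fin n → Bool => wt y ≤ r)).filter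
          (fun xy => ∃ i, xy.1 ∈ A i ∧ xy.2 ∈ B i ∧ a i = ip xy.1 xy.2)).card : ℝ)) :
    (2 * β) ^ 2 * (∑ i ∈ Finset.range (r + 1), (n.choose i : ℝ)) ≤ (t : ℝ) ∧
    ∀ c : ℝ, (t : ℝ) ≤ 2 ^ c →
      Real.logb 2 (∑ i ∈ Finset.range (r + 1), (n.choose i : ℝ)) -
        2 * Real.logb 2 (1 / (2 * β)) ≤ c := by
  set N := ∑ i ∈ range (r + 1), (n.choose i : ℝ)
  set D := (univ : Finset (Fin n → Bool)) ×ˢ univ.filter (fun y : Fin n → Bool => wt y ≤ r)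
  have hsub (i : Fin t) : A i ×ˢ B i ⊆ D := fun p hp => by
    rw [mem_product] at hp
    exact mem_product.2 ⟨mem_univ _, mem_filter.2 ⟨mem_univ _, hB i _ hp.2⟩⟩
  have hcover (p : (Fin n → Bool) × (Fin n → Bool)) (hp : p ∈ D) : ∃! i, p ∈ A i ×ˢ B i := by
    simpa only [mem_product] using hpart p.1 p.2 (mem_filter.1 (mem_product.1 hp).2).2
  have hN : 0 < N := sum_pos' (fun k _ => by positivity) ⟨0, by simp, by simp⟩
  have hD : (#D : ℝ) = 2 ^ n * N := by
    simp [D, N, card_product, card_filter_wt_le]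
  have hbias : 2 * β * #D ≤ ∑ i, signChar (a i) * ∑ x ∈ A i, ∑ y ∈ B i, signChar (ip x y) := by
    rw [sum_signChar_mul_sum_sum_eq hsub hcover, hD]
    linarith
  have hdisc := sq_sum_mul_sum_sum_le sum_signChar_ip_mul_signChar_ip hsub hcover
    (s := fun i => signChar (a i)) fun i => (signChar_sq (a i)).le
  rw [Fintype.card_fin] at hdisc
  have hmain : (2 * β) ^ 2 * N ≤ t := by
    have hsq := (pow_le_pow_left₀ (by positivity) hbias 2).trans hdisc
    rw [hD] at hsq
    refine le_of_mul_le_mul_right ?_ (by positivity : (0 : ℝ) < (2 ^ n) ^ 2 * N)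
    linarith
  exact ⟨hmain, fun c hc => logb_sub_two_mul_logb_le (by positivity) hN (hmain.trans hc)⟩

/-- If `{0,1}^n × {y : |y| ≤ r}` is partitioned into `t` labeled combinatorial
rectangles `A i × B i` with labels `a i ∈ ZMod 2`, and the number of pairs `(x,y)` whose
rectangle's label equals `x·y mod 2` is at least `(1/2 + β)·2^n·B(n,r)`, then
`t ≥ (2β)²·B(n,r)`; in particular, if `t ≤ 2^c` then
`c ≥ log₂ B(n,r) − 2·log₂(1/(2β))`. -/
theorem rectangle_partition_lower_bound (n r t : ℕ) (hn : 0 < n) (hr : 0 < r) (hrn : r ≤ n)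
    (ht : 0 < t) (β : ℝ) (hβ : 0 < β)
    (A B : Fin t → Finset (Fin n → Bool)) (a : Fin t → ZMod 2)
    (hB : ∀ i, ∀ y ∈ B i, wt y ≤ r)
    (hpart : ∀ x y : Fin n → Bool, wt y ≤ r → ∃! i : Fin t, x ∈ A i ∧ y ∈ B i)
    (hsucc : ((1 : ℝ) / 2 + β) * 2 ^ n * (∑ i ∈ Finset.range (r + 1), (n.choose i : ℝ)) ≤
      (((Finset.univ ×ˢ Finset.univ.filter (fun y : Fin n → Bool => wt y ≤ r)).filter
          (fun xy => ∃ i, xy.1 ∈ A i ∧ xy.2 ∈ B i ∧ a i = ip xy.1 xy.2)).card : ℝ)) :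
    (2 * β) ^ 2 * (∑ i ∈ Finset.range (r + 1), (n.choose i : ℝ)) ≤ (t : ℝ) ∧
    ∀ c : ℝ, (t : ℝ) ≤ 2 ^ c →
      Real.logb 2 (∑ i ∈ Finset.range (r + 1), (n.choose i : ℝ)) -
        2 * Real.logb 2 (1 / (2 * β)) ≤ c :=
  rectangle_partition_lower_bound_general n r t β hβ A B a hB hpart hsucc
end

section
/- For every integer p ≥ 2, all positive integers n, r with r ≤ n, and every δ ≥ 0: setting m = ⌈(p−1)·n^{1/(p−1)}⌉, there exists a (p, δ, pδ)-error-correcting data structure for the inner product problem IP_{n,r} of length N = p · 2^{(p−1)·r·m} ≤ p · 2^{r(p−1)^2 ⌈n^{1/(p−1)}⌉}. -/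
/-- The sequence of answers obtained by the (adaptive) decoder probing the string `y`
on query `q` with seed `s`: the `k`-th probe position may depend on the query, the seed,
and the previous `k` answers. -/
def runAns {N p : ℕ} {Q S : Type} (probe : (k : Fin p) → Q → S → (Fin k.val → Bool) → Fin N)
    (y : Fin N → Bool) (q : Q) (s : S) : (k : Fin p) → Bool
  | k => y (probe k q s (fun j => runAns probe y q s ⟨j.val, j.isLt.trans k.isLt⟩))
  termination_by k => k.val

/-- A `(p,δ,ε)`-error-correcting data structure of length `N` for `f : D → Q → A`:
an encoding `enc : D → {0,1}^N` together with a randomized decoder (seed set `Fin seeds`,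
adaptive probe-choice functions, and an output function) such that for every query `q`,
every data item `x`, and every `y ∈ {0,1}^N` within Hamming distance `δN` of `enc x`,
the decoder outputs `f x q` with probability at least `1 - ε` over a uniform seed. -/
structure ECDS (D Q A : Type) [DecidableEq A] (p N : ℕ) (δ ε : ℝ) (f : D → Q → A) where
  enc : D → (Fin N → Bool)
  seeds : ℕ
  seeds_pos : 0 < seeds
  probe : (k : Fin p) → Q → Fin seeds → (Fin k.val → Bool) → Fin N
  out : Q → Fin seeds → (Fin p → Bool) → A
  correct : ∀ (q : Q) (x : D) (y : Fin N → Bool),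
    (hammingDist y (enc x) : ℝ) ≤ δ * N →
    (1 - ε) * (seeds : ℝ) ≤
      ((Finset.univ.filter (fun s : Fin seeds =>
        out q s (runAns probe y q s) = f x q)).card : ℝ)

/-!
Put `d = p - 1` and `F = GF(2^d)`, a field with at least `p` elements. Since
`m^d ≤ d^d · C(m, d)` and `m ≥ d · n^{1/d}`, the indices `i < n` can be labelled by distinct
`d`-subsets `S i` of `Fin m`. Encode `x` by the form
`P_x(w) = ∑_{l < r} ∑_i x_i ∏_{j ∈ S i} w (l, j)` on `F^{r × m}`, homogeneous of degree `d`.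
For a query `q` of weight at most `r`, placing the indicator of `S i` in its own slot `l` for
each `i` in the support of `q` gives a point `z_q` with `P_x(z_q) = ⟨x, q⟩`.

Restricted to the line `τ ↦ τ z + w`, `P_x` is a polynomial of degree `d` with top
coefficient `P_x(z)`, so `P_x(z) = ∑_k c_k P_x(t_k z + w)` for `p` distinct nodes `t_k` and
Lagrange coefficients `c_k`. Block `k` of the code stores the bit `ψ(c_k P_x(w))` for every
`w ∈ F^{r × m}`, where `ψ : F → 𝔽₂` is linear with `ψ 1 = 1`; the decoder picks `w` at random and
XORs the bits at `t_k z_q + w`. Each probe is uniform in its block, so a union bound over the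
`p` probes puts the error probability at most `p δ`, and the length is
`p · |F|^{r m} = p · 2^{(p-1) r m}`.
-/

open Finset Polynomial

theorem runAns_of_nonadaptive {N p : ℕ} {Q S : Type} (probe : Fin p → Q → S → Fin N)
    (y : Fin N → Bool) (q : Q) (s : S) :
    runAns (fun k q s _ => probe k q s) y q s = fun k => y (probe k q s) :=
  funext fun k => by rw [runAns]

theorem hammingDist_eq_sum_of_equiv_prod {ι J K β : Type*} [Fintype ι] [Fintype J] [Fintype K]
    [DecidableEq β] (pos : ι × J ≃ K) (y z : K → β) :
    hammingDist y z = ∑ k, hammingDist (fun j => y (pos (k, j))) (fun j => z (pos (k, j))) := by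
  simp only [hammingDist, card_filter]
  rw [← pos.sum_comp, Fintype.sum_prod_type]

theorem card_filter_exists_ne_le_sum_hammingDist {ι S J β : Type*} [Fintype ι] [Fintype S]
    [Fintype J] [DecidableEq β] (e : ι → S ≃ J) (u v : ι → J → β) :
    #{s | ∃ k, u k (e k s) ≠ v k (e k s)} ≤ ∑ k, hammingDist (u k) (v k) := by
  classical
  calc _ ≤ #(univ.biUnion fun k => {s | u k (e k s) ≠ v k (e k s)}) :=
        card_le_card fun s => by simp
    _ ≤ ∑ k, #{s | u k (e k s) ≠ v k (e k s)} := card_biUnion_le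
    _ = _ := sum_congr rfl fun k _ => card_equiv (e k) (by simp)

theorem ECDS.nonempty_of_perfect_smooth {D Q A J : Type} [DecidableEq A] [Fintype J] [Nonempty J]
    {p : ℕ} (δ : ℝ) (f : D → Q → A) (enc : D → Fin p → J → Bool) (probe : Fin p → Q → J ≃ J)
    (out : Q → J → (Fin p → Bool) → A)
    (hout : ∀ x q s, out q s (fun k => enc x k (probe k q s)) = f x q) :
    Nonempty (ECDS D Q A p (p * Fintype.card J) δ (p * δ) f) := by
  let e : J ≃ Fin (Fintype.card J) := Fintype.equivFin J
  let pos : Fin p × J ≃ Fin (p * Fintype.card J) :=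
    (Equiv.prodCongr (Equiv.refl _) e).trans finProdFinEquiv
  refine ⟨{
    enc := fun x i => enc x (pos.symm i).1 (pos.symm i).2
    seeds := Fintype.card J
    seeds_pos := Fintype.card_pos
    probe := fun k q s _ => pos (k, probe k q (e.symm s))
    out := fun q s => out q (e.symm s)
    correct := ?_ }⟩
  intro q x y hy
  simp only [runAns_of_nonadaptive (fun k q s => pos (k, probe k q (e.symm s)))]
  let seedProbe : Fin p → Fin (Fintype.card J) ≃ J := fun k => e.symm.trans (probe k q)
  let read : Fin p → J → Bool := fun k j => y (pos (k, j))
  have hunion : #{s | ∃ k, read k (seedProbe k s) ≠ enc x k (seedProbe k s)} ≤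
      hammingDist y (fun i => enc x (pos.symm i).1 (pos.symm i).2) := by
    simpa [hammingDist_eq_sum_of_equiv_prod pos y] using
      card_filter_exists_ne_le_sum_hammingDist seedProbe read (enc x)
  have hfail : #{s | ¬ out q (e.symm s) (fun k => read k (seedProbe k s)) = f x q} ≤
      #{s | ∃ k, read k (seedProbe k s) ≠ enc x k (seedProbe k s)} := by
    refine card_le_card fun s => ?_
    simp only [mem_filter, mem_univ, true_and]
    contrapose!
    intro hgood
    rw [funext hgood]
    exact hout x q _
  have hcount := card_filter_add_card_filter_not (s := univ)
    fun s => out q (e.symm s) (fun k => read k (seedProbe k s)) = f x q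
  rw [card_univ, Fintype.card_fin] at hcount
  have hcount' := (Nat.cast_le (α := ℝ)).mpr (hcount ▸ Nat.add_le_add_left (hfail.trans hunion) _)
  push_cast at hy hcount'
  change (1 - p * δ) * (Fintype.card J : ℝ) ≤
    #{s | out q (e.symm s) (fun k => read k (seedProbe k s)) = f x q}
  linarith

theorem Lagrange.coeff_eq_sum_basis_coeff_mul_eval {F ι : Type*} [Field F] [DecidableEq ι]
    {s : Finset ι} {v : ι → F} (hvs : Set.InjOn v s) {f : F[X]} (hf : f.degree < #s) (e : ℕ) :
    f.coeff e = ∑ i ∈ s, (Lagrange.basis s v i).coeff e * f.eval (v i) := by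
  conv_lhs => rw [Lagrange.eq_interpolate hvs hf]
  rw [Lagrange.interpolate_apply, finsetSum_coeff]
  exact sum_congr rfl fun i _ => by rw [coeff_C_mul, mul_comm]

theorem Polynomial.natDegree_prod_linear_le {F σ : Type*} [CommSemiring F] (T : Finset σ)
    (a b : σ → F) :
    (∏ j ∈ T, (C (a j) * X + C (b j))).natDegree ≤ #T :=
  (natDegree_prod_le _ _).trans <| (sum_le_sum fun j (_ : j ∈ T) =>
    (natDegree_linear_le : (C (a j) * X + C (b j)).natDegree ≤ 1)).trans (by simp)

theorem Polynomial.coeff_prod_linear_card {F σ : Type*} [CommSemiring F] (T : Finset σ)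
    (a b : σ → F) :
    (∏ j ∈ T, (C (a j) * X + C (b j))).coeff #T = ∏ j ∈ T, a j := by
  simpa using coeff_prod_of_natDegree_le (s := T) (fun j => C (a j) * X + C (b j)) 1
    fun j _ => natDegree_linear_le

/-- The left side is the coefficient of `τ ^ d` in `∑ a, c a * ∏ j ∈ S a, (τ * z a j + w a j)`,
a polynomial of degree at most `d`, hence is read off its values at the nodes `t k`. -/
theorem sum_prod_eq_sum_lagrange {F ι A σ : Type*} [Field F] [Fintype ι] [DecidableEq ι]
    [Fintype A] {d : ℕ} (hd : d < Fintype.card ι) (t : ι ↪ F) (S : A → Finset σ)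
    (hS : ∀ a, #(S a) = d) (c : A → F) (z w : A → σ → F) :
    ∑ a, c a * ∏ j ∈ S a, z a j =
      ∑ k, (Lagrange.basis univ t k).coeff d * ∑ a, c a * ∏ j ∈ S a, (t k * z a j + w a j) := by
  let f : F[X] := ∑ a, C (c a) * ∏ j ∈ S a, (C (z a j) * X + C (w a j))
  have hdeg : f.natDegree ≤ d := natDegree_sum_le_of_forall_le _ _ fun a _ =>
    (natDegree_C_mul_le _ _).trans (hS a ▸ natDegree_prod_linear_le _ _ _)
  have hcoeff : f.coeff d = ∑ a, c a * ∏ j ∈ S a, z a j := by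
    simp only [f, finsetSum_coeff, coeff_C_mul]
    exact sum_congr rfl fun a _ => by rw [← hS a, coeff_prod_linear_card]
  have heval : ∀ τ, f.eval τ = ∑ a, c a * ∏ j ∈ S a, (τ * z a j + w a j) := fun τ => by
    simp [f, eval_finsetSum, eval_prod, mul_comm _ τ]
  rw [← hcoeff, Lagrange.coeff_eq_sum_basis_coeff_mul_eval t.injective.injOn
    ((degree_le_natDegree).trans_lt (by rw [card_univ]; exact_mod_cast hdeg.trans_lt hd))]
  simp only [heval]

theorem Nat.pow_le_pow_mul_choose {m d : ℕ} (h : d ≤ m) : m ^ d ≤ d ^ d * m.choose d := by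
  have hterm : ∀ i ∈ range d, (d - i) * m ≤ d * (m - i) := fun i hi => by
    have hi : i < d := mem_range.mp hi
    zify [hi.le, hi.le.trans h]
    nlinarith
  have hprod := prod_le_prod' hterm
  rw [prod_mul_distrib, prod_mul_distrib, ← Nat.descFactorial_eq_prod_range,
    ← Nat.descFactorial_eq_prod_range, Nat.descFactorial_self, prod_const, prod_const, card_range,
    Nat.descFactorial_eq_factorial_mul_choose] at hprod
  nlinarith [d.factorial_pos]

theorem Nat.le_choose_ceil_mul_rpow {n d : ℕ} (hd : 0 < d) :
    n ≤ (⌈(d : ℝ) * (n : ℝ) ^ ((1 : ℝ) / d)⌉₊).choose d := by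
  rcases Nat.eq_zero_or_pos n with rfl | hn
  · exact Nat.zero_le _
  set m := ⌈(d : ℝ) * (n : ℝ) ^ ((1 : ℝ) / d)⌉₊
  have hroot : ((n : ℝ) ^ ((1 : ℝ) / d)) ^ d = n := by
    rw [one_div, Real.rpow_inv_natCast_pow n.cast_nonneg hd.ne']
  have hroot_ge : 1 ≤ (n : ℝ) ^ ((1 : ℝ) / d) :=
    Real.one_le_rpow (by exact_mod_cast hn) (by positivity)
  have hm : (d : ℝ) * (n : ℝ) ^ ((1 : ℝ) / d) ≤ m := Nat.le_ceil _
  have hdm : d ≤ m := by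
    have : (d : ℝ) ≤ m := by nlinarith
    exact_mod_cast this
  have key : (d : ℝ) ^ d * n ≤ (d : ℝ) ^ d * m.choose d := calc
    (d : ℝ) ^ d * n = ((d : ℝ) * (n : ℝ) ^ ((1 : ℝ) / d)) ^ d := by rw [mul_pow, hroot]
    _ ≤ (m : ℝ) ^ d := pow_le_pow_left₀ (by positivity) hm d
    _ ≤ (d : ℝ) ^ d * m.choose d := by exact_mod_cast Nat.pow_le_pow_mul_choose hdm
  exact_mod_cast le_of_mul_le_mul_left key (by positivity)

theorem exists_injective_card_eq_of_le_choose {n m d : ℕ} (h : n ≤ m.choose d) :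
    ∃ S : Fin n → Finset (Fin m), Function.Injective S ∧ ∀ i, #(S i) = d := by
  obtain ⟨S⟩ : Nonempty (Fin n ↪ {s : Finset (Fin m) // #s = d}) :=
    Function.Embedding.nonempty_of_card_le (by simpa using h)
  exact ⟨fun i => S i, Subtype.val_injective.comp S.injective, fun i => (S i).2⟩

theorem exists_sum_option_elim_eq_sum {ι M : Type*} [AddCommMonoid M] {r : ℕ} (T : Finset ι)
    (hT : #T ≤ r) : ∃ o : Fin r → Option ι, ∀ c : ι → M, ∑ l, (o l).elim 0 c = ∑ i ∈ T, c i := by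
  let e : T ↪ Fin r := (Fintype.equivFin T).toEmbedding.trans (Fin.castLEEmb (by simpa using hT))
  refine ⟨fun l => (Function.partialInv e l).map Subtype.val, fun c => ?_⟩
  rw [← sum_coe_sort T]
  refine (Fintype.sum_of_injective e e.injective _ _ (fun l hl => ?_) fun i => ?_).symm
  · simp [Function.partialInv, show ¬ ∃ i, e i = l from hl]
  · simp [Function.partialInv_left e.injective]

def indicatorPoint {F ι σ : Type*} [Zero F] [One F] [DecidableEq σ] (S : ι → Finset σ)
    (o : Option ι) (j : σ) : F :=
  o.elim 0 fun i => if j ∈ S i then 1 else 0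

theorem sum_mul_prod_indicatorPoint {F ι σ : Type*} [CommSemiring F] [Fintype ι] [DecidableEq σ]
    {d : ℕ} {S : ι → Finset σ} (hS : Function.Injective S) (hcard : ∀ i, #(S i) = d)
    (hd : 0 < d) (c : ι → F) (o : Option ι) :
    ∑ i, c i * ∏ j ∈ S i, indicatorPoint S o j = o.elim 0 c := by
  classical
  cases o with
  | none => simp [indicatorPoint, hcard, zero_pow hd.ne']
  | some i₀ =>
    have hsub : ∀ i, (S i ⊆ S i₀) ↔ i = i₀ := fun i =>
      ⟨fun h => hS (eq_of_subset_of_card_le h (by rw [hcard, hcard])), fun h => h ▸ subset_rfl⟩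
    simp [indicatorPoint, prod_boole, ← subset_iff, hsub]

def blockPoly {F ι σ : Type*} [CommSemiring F] [Fintype ι] {r : ℕ} (S : ι → Finset σ) (a : ι → F)
    (w : Fin r × σ → F) : F :=
  ∑ li : Fin r × ι, a li.2 * ∏ j ∈ S li.2, w (li.1, j)

theorem blockPoly_indicatorPoint {F ι σ : Type*} [CommSemiring F] [Fintype ι] [DecidableEq σ]
    {d r : ℕ} {S : ι → Finset σ} (hS : Function.Injective S) (hcard : ∀ i, #(S i) = d) (hd : 0 < d)
    (a : ι → F) (o : Fin r → Option ι) :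
    blockPoly S a (fun v => indicatorPoint S (o v.1) v.2) = ∑ l, (o l).elim 0 a := by
  rw [blockPoly, Fintype.sum_prod_type]
  exact sum_congr rfl fun l _ => sum_mul_prod_indicatorPoint hS hcard hd a (o l)

theorem blockPoly_eq_sum_lagrange {F ι σ : Type*} [Field F] [Fintype ι] {d r : ℕ}
    {S : ι → Finset σ} (hcard : ∀ i, #(S i) = d) (t : Fin (d + 1) ↪ F) (a : ι → F)
    (z w : Fin r × σ → F) :
    blockPoly S a z = ∑ k, (Lagrange.basis univ t k).coeff d * blockPoly S a (t k • z + w) :=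
  sum_prod_eq_sum_lagrange (by simp) t (fun li : Fin r × ι => S li.2) (fun li => hcard li.2)
    (fun li => a li.2) (fun li j => z (li.1, j)) (fun li j => w (li.1, j))

theorem ip_eq_sum_filter {n : ℕ} (x y : Fin n → Bool) :
    ip x y = ∑ i ∈ {i | y i = true}, if x i then 1 else 0 := by
  rw [ip, sum_filter]
  exact sum_congr rfl fun i _ => by cases x i <;> cases y i <;> rfl

theorem ZMod.two_ite_decide_eq_one (a : ZMod 2) : (if decide (a = 1) then 1 else 0) = a := by
  revert a
  decide

theorem nonempty_ecds_ip_of_le_choose {n r d m : ℕ} (hd : 0 < d) (hnm : n ≤ m.choose d)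
    (F : Type) [Field F] [Fintype F] [Algebra (ZMod 2) F] (hF : d + 1 ≤ Fintype.card F) (δ : ℝ) :
    Nonempty (ECDS (Fin n → Bool) {y : Fin n → Bool // wt y ≤ r} (ZMod 2) (d + 1)
      ((d + 1) * Fintype.card F ^ (r * m)) δ ((d + 1 : ℕ) * δ) (fun x q => ip x q.val)) := by
  obtain ⟨S, hSinj, hScard⟩ := exists_injective_card_eq_of_le_choose hnm
  obtain ⟨t⟩ : Nonempty (Fin (d + 1) ↪ F) :=
    Function.Embedding.nonempty_of_card_le (by simpa using hF)
  obtain ⟨ψ, hψ⟩ := Module.Projective.exists_dual_eq_one (ZMod 2) (one_ne_zero : (1 : F) ≠ 0)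
  have hψ_algebraMap : ∀ b, ψ (algebraMap (ZMod 2) F b) = b := fun b => by
    rw [Algebra.algebraMap_eq_smul_one, map_smul, hψ, smul_eq_mul, mul_one]
  choose o ho using fun q : {y : Fin n → Bool // wt y ≤ r} =>
    exists_sum_option_elim_eq_sum (M := F) {i | q.val i = true} q.2
  let a : (Fin n → Bool) → Fin n → F := fun x i => algebraMap (ZMod 2) F (if x i then 1 else 0)
  let z : {y : Fin n → Bool // wt y ≤ r} → Fin r × Fin m → F :=
    fun q v => indicatorPoint S (o q v.1) v.2
  let coef : Fin (d + 1) → F := fun k => (Lagrange.basis univ t k).coeff d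
  have hdecode : ∀ x q w, ∑ k, coef k * blockPoly S (a x) (t k • z q + w) =
      algebraMap (ZMod 2) F (ip x q.val) := fun x q w => by
    rw [← blockPoly_eq_sum_lagrange hScard, blockPoly_indicatorPoint hSinj hScard hd, ho,
      ip_eq_sum_filter, map_sum]
  simpa [Fintype.card_fun] using ECDS.nonempty_of_perfect_smooth (J := Fin r × Fin m → F) δ
    (fun x q => ip x q.val) (fun x k w => decide (ψ (coef k * blockPoly S (a x) w) = 1))
    (fun k q => Equiv.addLeft (t k • z q)) (fun _ _ ans => ∑ k, if ans k then 1 else 0)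
    fun x q w => by
      rw [sum_congr rfl fun k _ => ZMod.two_ite_decide_eq_one _, ← map_sum]
      exact (congrArg ψ (hdecode x q w)).trans (hψ_algebraMap _)

theorem Nat.ceil_natCast_mul_le {α : Type*} [Semiring α] [LinearOrder α] [IsStrictOrderedRing α]
    [FloorSemiring α] (d : ℕ) (x : α) : ⌈(d : α) * x⌉₊ ≤ d * ⌈x⌉₊ :=
  Nat.ceil_le.mpr <| by
    push_cast
    exact mul_le_mul_of_nonneg_left (Nat.le_ceil x) d.cast_nonneg

theorem ip_polynomial_ecds_exists_general (n r p : ℕ) (hp : 2 ≤ p) (δ : ℝ) :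
    ∃ m N : ℕ,
      m = ⌈((p : ℝ) - 1) * (n : ℝ) ^ ((1 : ℝ) / ((p : ℝ) - 1))⌉₊ ∧
      N = p * 2 ^ ((p - 1) * r * m) ∧
      N ≤ p * 2 ^ (r * (p - 1) ^ 2 * ⌈(n : ℝ) ^ ((1 : ℝ) / ((p : ℝ) - 1))⌉₊) ∧
      Nonempty (ECDS (Fin n → Bool) {y : Fin n → Bool // wt y ≤ r} (ZMod 2) p N δ ((p : ℝ) * δ)
        (fun x q => ip x q.val)) := by
  obtain ⟨d, rfl⟩ : ∃ d, p = d + 1 := ⟨p - 1, by omega⟩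
  have hd : 0 < d := by omega
  have hcast : ((d + 1 : ℕ) : ℝ) - 1 = d := by push_cast; ring
  simp only [hcast, Nat.add_sub_cancel]
  refine ⟨_, _, rfl, rfl, ?_, ?_⟩
  · refine Nat.mul_le_mul_left _ (Nat.pow_le_pow_right two_pos ?_)
    calc d * r * _ ≤ d * r * (d * _) := Nat.mul_le_mul_left _ (Nat.ceil_natCast_mul_le _ _)
      _ = _ := by ring
  · have : Fintype (GaloisField 2 d) := Fintype.ofFinite _
    have hcard : Fintype.card (GaloisField 2 d) = 2 ^ d := by
      rw [← Nat.card_eq_fintype_card, GaloisField.card 2 d hd.ne']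
    simpa [hcard, ← pow_mul, mul_assoc] using
      nonempty_ecds_ip_of_le_choose hd (Nat.le_choose_ceil_mul_rpow hd) (GaloisField 2 d)
        (hcard ▸ Nat.lt_two_pow_self) δ

/-- For every `p ≥ 2`, `r ≤ n` and `δ ≥ 0`: with
`m = ⌈(p−1)·n^{1/(p−1)}⌉`, there is a `(p,δ,pδ)`-error-correcting data structure for the
inner product problem `IP_{n,r}` of length `N = p·2^{(p−1)·r·m}`, and moreover
`N ≤ p·2^{r·(p−1)²·⌈n^{1/(p−1)}⌉}`. -/
theorem ip_polynomial_ecds_exists (n r p : ℕ) (hp : 2 ≤ p) (hn : 0 < n) (hr : 0 < r)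
    (hrn : r ≤ n) (δ : ℝ) (hδ : 0 ≤ δ) :
    ∃ m N : ℕ,
      m = ⌈((p : ℝ) - 1) * (n : ℝ) ^ ((1 : ℝ) / ((p : ℝ) - 1))⌉₊ ∧
      N = p * 2 ^ ((p - 1) * r * m) ∧
      N ≤ p * 2 ^ (r * (p - 1) ^ 2 * ⌈(n : ℝ) ^ ((1 : ℝ) / ((p : ℝ) - 1))⌉₊) ∧
      Nonempty (ECDS (Fin n → Bool) {y : Fin n → Bool // wt y ≤ r} (ZMod 2) p N δ ((p : ℝ) * δ)
        (fun x q => ip x q.val)) :=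
  ip_polynomial_ecds_exists_general n r p hp δ
end
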